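/- Let σ ≥ −1, T > 0 and let A, B : [0,T] × ℝ² → ℂ be measurable with sup_{0≤t≤T} ‖A(t)‖_{X⁰}, sup_{0≤t≤T} ‖B(t)‖_{X⁰}, ∫₀^T ‖A(t)‖_{X^{σ+1}} dt and ∫₀^T ‖B(t)‖_{X^{σ+1}} dt all finite. Define Q(t,ξ) := ∫₀^t e^{−(t−z)|ξ|} N[A,B](z,ξ) dz. Then sup_{0≤t≤T} ∫_{ℝ²} |ξ|^σ |Q(t,ξ)| dξ ≤ 2^{σ+1} [ (sup_{0≤t≤T} ‖A(t)‖_{X⁰}) ∫₀^T ‖B(t)‖_{X^{σ+1}} dt + (∫₀^T ‖A(t)‖_{X^{σ+1}} dt)(sup_{0≤t≤T} ‖B(t)‖_{X⁰}) ]. -/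

import Mathlib

open MeasureTheory Filter
open scoped ENNReal NNReal

noncomputable section

abbrev E2 : Type := EuclideanSpace ℝ (Fin 2)

/-- `X^σ`-type norm of a time slice: `∫ |ξ|^σ |Θ(t,ξ)| dξ` (valued in `ℝ≥0∞`). -/
def Xnorm (σ : ℝ) (g : E2 → ℂ) : ℝ≥0∞ :=
  ∫⁻ ξ : E2, ENNReal.ofReal (‖ξ‖ ^ σ) * ‖g ξ‖₊

/-- Bilinear quasi-geostrophic term `N[A,B]` on the Fourier side:
the Fourier transform of `-div(b u_a)`. -/
def QGB (A B : ℝ → E2 → ℂ) (z : ℝ) (ξ : E2) : ℂ :=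
  ∫ η : E2, (((ξ 0 * η 1 - ξ 1 * η 0) / ‖η‖ : ℝ) : ℂ) * A z η * B z (ξ - η)

/-! The weighted symbol is controlled by the two frequencies: `|ξ₁η₂ − ξ₂η₁| / |η| ≤ |ξ|` and
`|ξ| ≤ |η| + |ξ − η|` give `|ξ|^σ |ξ₁η₂ − ξ₂η₁| / |η| ≤ 2^{σ+1} (|η|^{σ+1} + |ξ − η|^{σ+1})`
for `σ ≥ −1`. Hence `|ξ|^σ |N[A,B](z,ξ)|` is dominated by a sum of two convolutions, whose
integrals in `ξ` are `‖A‖_{X⁰} ‖B‖_{X^{σ+1}} + ‖A‖_{X^{σ+1}} ‖B‖_{X⁰}` at time `z`. The damping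
factor `e^{−(t−z)|ξ|}` is at most `1`, so by Tonelli it remains to integrate this bound over
`z ∈ [0, T]`, estimating each `X⁰` factor by its supremum. -/

theorem ENNReal.add_rpow_le_two_rpow_mul_add_rpow {p : ℝ} (hp : 0 ≤ p) (a b : ℝ≥0∞) :
    (a + b) ^ p ≤ 2 ^ p * (a ^ p + b ^ p) := by
  rcases le_total p 1 with hp1 | hp1
  · calc (a + b) ^ p ≤ a ^ p + b ^ p := ENNReal.rpow_add_le_add_rpow a b hp hp1
      _ ≤ 2 ^ p * (a ^ p + b ^ p) := le_mul_of_one_le_left' <| by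
        simpa using ENNReal.rpow_le_rpow_of_exponent_le one_le_two hp
  · calc (a + b) ^ p ≤ 2 ^ (p - 1) * (a ^ p + b ^ p) :=
          ENNReal.rpow_add_le_mul_rpow_add_rpow a b hp1
      _ ≤ 2 ^ p * (a ^ p + b ^ p) := by
        gcongr
        · norm_num
        · linarith

theorem MeasureTheory.lintegral_lconvolution {G : Type*} [MeasurableSpace G] [AddGroup G]
    [MeasurableAdd₂ G] [MeasurableNeg G] {μ : Measure G} [μ.IsAddLeftInvariant] [SFinite μ]
    {f g : G → ℝ≥0∞} (hf : Measurable f) (hg : Measurable g) :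
    ∫⁻ x, (f ⋆ₗ[μ] g) x ∂μ = (∫⁻ x, f x ∂μ) * ∫⁻ x, g x ∂μ := by
  simp only [lconvolution_def]
  rw [lintegral_lintegral_swap (by fun_prop), ← lintegral_mul_const _ hf]
  refine lintegral_congr fun y => ?_
  rw [lintegral_const_mul _ (by fun_prop), lintegral_add_left_eq_self]

theorem MeasureTheory.setLIntegral_mul_le_setLIntegral_mul_iSup {α : Type*} [MeasurableSpace α]
    {μ : Measure α} {s : Set α} (hs : MeasurableSet s) {f g : α → ℝ≥0∞} (hf : Measurable f) :
    ∫⁻ x in s, f x * g x ∂μ ≤ (∫⁻ x in s, f x ∂μ) * ⨆ x ∈ s, g x := by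
  rw [← lintegral_mul_const _ hf]
  exact setLIntegral_mono' hs fun x hx => mul_le_mul_right (le_iSup₂ (f := fun x _ => g x) x hx) _

theorem enorm_intervalIntegral_exp_mul_le {r t T : ℝ} (hr : 0 ≤ r) (ht : t ∈ Set.Icc 0 T)
    (f : ℝ → ℂ) :
    ‖∫ z in (0:ℝ)..t, ((Real.exp (-((t - z) * r)) : ℝ) : ℂ) * f z‖ₑ
      ≤ ∫⁻ z in Set.Icc 0 T, ‖f z‖ₑ := by
  rw [intervalIntegral.integral_of_le ht.1]
  calc _ ≤ ∫⁻ z in Set.Ioc 0 t, ‖((Real.exp (-((t - z) * r)) : ℝ) : ℂ) * f z‖ₑ :=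
        enorm_integral_le_lintegral_enorm _
    _ ≤ ∫⁻ z in Set.Ioc 0 t, ‖f z‖ₑ := by
        refine setLIntegral_mono' measurableSet_Ioc fun z hz => ?_
        have hdecay : Real.exp (-((t - z) * r)) ≤ 1 :=
          Real.exp_le_one_iff.2 (neg_nonpos.2 (mul_nonneg (sub_nonneg.2 hz.2) hr))
        rw [enorm_mul, ← ofReal_norm, Complex.norm_real, Real.norm_of_nonneg (Real.exp_nonneg _)]
        exact mul_le_of_le_one_left' (ENNReal.ofReal_le_one.2 hdecay)
    _ ≤ ∫⁻ z in Set.Icc 0 T, ‖f z‖ₑ :=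
        lintegral_mono_set (Set.Ioc_subset_Icc_self.trans (Set.Icc_subset_Icc_right ht.2))

theorem abs_cross_le_norm_mul_norm (ξ η : E2) : |ξ 0 * η 1 - ξ 1 * η 0| ≤ ‖ξ‖ * ‖η‖ := by
  rw [EuclideanSpace.norm_eq, EuclideanSpace.norm_eq, ← Real.sqrt_mul (by positivity),
    ← Real.sqrt_sq_eq_abs]
  refine Real.sqrt_le_sqrt ?_
  simp only [Fin.sum_univ_two, Real.norm_eq_abs, sq_abs]
  nlinarith [sq_nonneg (ξ 0 * η 0 + ξ 1 * η 1)]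

theorem norm_cross_div_norm_le (ξ η : E2) : ‖(ξ 0 * η 1 - ξ 1 * η 0) / ‖η‖‖ ≤ ‖ξ‖ := by
  rcases eq_or_ne η 0 with rfl | hη
  · simp
  rw [norm_div, norm_norm, Real.norm_eq_abs, div_le_iff₀ (norm_pos_iff.2 hη)]
  exact abs_cross_le_norm_mul_norm ξ η

theorem ofReal_rpow_mul_enorm_cross_div_le {σ : ℝ} (hσ : -1 ≤ σ) (ξ η : E2) :
    ENNReal.ofReal (‖ξ‖ ^ σ) * ‖(ξ 0 * η 1 - ξ 1 * η 0) / ‖η‖‖ₑ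
      ≤ 2 ^ (σ + 1) * (‖η‖ₑ ^ (σ + 1) + ‖ξ - η‖ₑ ^ (σ + 1)) := by
  have hp : 0 ≤ σ + 1 := by linarith
  rcases eq_or_ne ξ 0 with rfl | hξ
  · simp
  have hsymbol : ‖ξ‖ ^ σ * ‖(ξ 0 * η 1 - ξ 1 * η 0) / ‖η‖‖ ≤ ‖ξ‖ ^ (σ + 1) := by
    rw [Real.rpow_add_one (norm_ne_zero_iff.2 hξ)]
    gcongr
    exact norm_cross_div_norm_le ξ η
  calc _ = ENNReal.ofReal (‖ξ‖ ^ σ * ‖(ξ 0 * η 1 - ξ 1 * η 0) / ‖η‖‖) := by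
        rw [ENNReal.ofReal_mul (by positivity), ofReal_norm]
    _ ≤ ENNReal.ofReal (‖ξ‖ ^ (σ + 1)) := ENNReal.ofReal_le_ofReal hsymbol
    _ = ‖ξ‖ₑ ^ (σ + 1) := by rw [← ENNReal.ofReal_rpow_of_nonneg (norm_nonneg _) hp, ofReal_norm]
    _ ≤ (‖η‖ₑ + ‖ξ - η‖ₑ) ^ (σ + 1) := by
        gcongr
        simpa using enorm_add_le η (ξ - η)
    _ ≤ _ := ENNReal.add_rpow_le_two_rpow_mul_add_rpow hp _ _

def weightedENorm (q : ℝ) (g : E2 → ℂ) (ξ : E2) : ℝ≥0∞ := ‖ξ‖ₑ ^ q * ‖g ξ‖ₑ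

@[fun_prop]
theorem Measurable.weightedENorm {g : E2 → ℂ} (hg : Measurable g) (q : ℝ) :
    Measurable (weightedENorm q g) := by
  unfold _root_.weightedENorm
  fun_prop

-- For `q < 0` the two sides differ at `ξ = 0`: `‖0‖ₑ ^ q = ⊤` but `ENNReal.ofReal (0 ^ q) = 0`.
theorem Xnorm_eq_lintegral_weightedENorm {q : ℝ} (hq : 0 ≤ q) (g : E2 → ℂ) :
    Xnorm q g = ∫⁻ ξ, weightedENorm q g ξ :=
  lintegral_congr fun ξ => by
    rw [weightedENorm, ← ENNReal.ofReal_rpow_of_nonneg (norm_nonneg _) hq, ofReal_norm]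
    rfl

theorem measurable_Xnorm {A : ℝ → E2 → ℂ} (hA : Measurable (Function.uncurry A)) (q : ℝ) :
    Measurable fun z => Xnorm q (A z) :=
  Measurable.lintegral_prod_right'
    (f := fun x : ℝ × E2 => ENNReal.ofReal (‖x.2‖ ^ q) * ‖A x.1 x.2‖₊)
    ((measurable_snd.norm.pow_const q).ennreal_ofReal.mul hA.enorm)

theorem measurable_QGB {A B : ℝ → E2 → ℂ} (hA : Measurable (Function.uncurry A))
    (hB : Measurable (Function.uncurry B)) : Measurable (Function.uncurry (QGB A B)) := by
  have hB' : Measurable fun x : (ℝ × E2) × E2 => B x.1.1 (x.1.2 - x.2) :=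
    hB.comp (measurable_fst.fst.prodMk (measurable_fst.snd.sub measurable_snd))
  have hA' : Measurable fun x : (ℝ × E2) × E2 => A x.1.1 x.2 :=
    hA.comp (measurable_fst.fst.prodMk measurable_snd)
  refine (StronglyMeasurable.integral_prod_right' (f := fun x : (ℝ × E2) × E2 =>
    (((x.1.2 0 * x.2 1 - x.1.2 1 * x.2 0) / ‖x.2‖ : ℝ) : ℂ) * A x.1.1 x.2 * B x.1.1 (x.1.2 - x.2))
    ?_).measurable
  refine Measurable.stronglyMeasurable ?_
  fun_prop

theorem ofReal_rpow_mul_enorm_QGB_le {σ : ℝ} (hσ : -1 ≤ σ) {A B : ℝ → E2 → ℂ} {z : ℝ}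
    (hA : Measurable (A z)) (hB : Measurable (B z)) (ξ : E2) :
    ENNReal.ofReal (‖ξ‖ ^ σ) * ‖QGB A B z ξ‖ₑ
      ≤ 2 ^ (σ + 1) * ((weightedENorm 0 (A z) ⋆ₗ weightedENorm (σ + 1) (B z)) ξ
        + (weightedENorm (σ + 1) (A z) ⋆ₗ weightedENorm 0 (B z)) ξ) := by
  set c : E2 → ℝ := fun η => (ξ 0 * η 1 - ξ 1 * η 0) / ‖η‖
  have hp : 0 ≤ σ + 1 := by linarith
  calc _ ≤ ENNReal.ofReal (‖ξ‖ ^ σ) * ∫⁻ η, ‖c η‖ₑ * (‖A z η‖ₑ * ‖B z (ξ - η)‖ₑ) := by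
        gcongr
        refine (enorm_integral_le_lintegral_enorm _).trans_eq (lintegral_congr fun η => ?_)
        rw [enorm_mul, enorm_mul, ← ofReal_norm, Complex.norm_real, ofReal_norm, mul_assoc]
    _ = ∫⁻ η, ENNReal.ofReal (‖ξ‖ ^ σ) * ‖c η‖ₑ * (‖A z η‖ₑ * ‖B z (ξ - η)‖ₑ) := by
        rw [← lintegral_const_mul' _ _ ENNReal.ofReal_ne_top]
        simp only [mul_assoc]
    _ ≤ ∫⁻ η, 2 ^ (σ + 1) * (‖η‖ₑ ^ (σ + 1) + ‖ξ - η‖ₑ ^ (σ + 1))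
          * (‖A z η‖ₑ * ‖B z (ξ - η)‖ₑ) :=
        lintegral_mono fun η => by grw [ofReal_rpow_mul_enorm_cross_div_le hσ ξ η]
    _ = _ := by
        rw [lconvolution_def, lconvolution_def, ← lintegral_add_left (by fun_prop),
          ← lintegral_const_mul' _ _ (ENNReal.rpow_ne_top_of_nonneg hp ENNReal.ofNat_ne_top)]
        refine lintegral_congr fun η => ?_
        simp only [weightedENorm, neg_add_eq_sub, ENNReal.rpow_zero, one_mul]
        ring

theorem lintegral_ofReal_rpow_mul_enorm_QGB_le {σ : ℝ} (hσ : -1 ≤ σ) {A B : ℝ → E2 → ℂ}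
    {z : ℝ} (hA : Measurable (A z)) (hB : Measurable (B z)) :
    ∫⁻ ξ, ENNReal.ofReal (‖ξ‖ ^ σ) * ‖QGB A B z ξ‖ₑ
      ≤ 2 ^ (σ + 1) * (Xnorm 0 (A z) * Xnorm (σ + 1) (B z)
        + Xnorm (σ + 1) (A z) * Xnorm 0 (B z)) := by
  have hp : 0 ≤ σ + 1 := by linarith
  calc _ ≤ _ := lintegral_mono fun ξ => ofReal_rpow_mul_enorm_QGB_le hσ hA hB ξ
    _ = _ := by
      rw [lintegral_const_mul' _ _ (ENNReal.rpow_ne_top_of_nonneg hp ENNReal.ofNat_ne_top),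
        lintegral_add_left (by fun_prop), lintegral_lconvolution (by fun_prop) (by fun_prop),
        lintegral_lconvolution (by fun_prop) (by fun_prop), Xnorm_eq_lintegral_weightedENorm hp,
        Xnorm_eq_lintegral_weightedENorm hp, Xnorm_eq_lintegral_weightedENorm le_rfl,
        Xnorm_eq_lintegral_weightedENorm le_rfl]

theorem bilinear_duhamel_sup_bound_general (σ : ℝ) (hσ : -1 ≤ σ) (T : ℝ)
    (A B : ℝ → E2 → ℂ)
    (hA : Measurable (Function.uncurry A)) (hB : Measurable (Function.uncurry B)) :
    (⨆ t ∈ Set.Icc (0:ℝ) T, ∫⁻ ξ : E2, ENNReal.ofReal (‖ξ‖ ^ σ) *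
        ‖∫ z in (0:ℝ)..t, ((Real.exp (-((t - z) * ‖ξ‖)) : ℝ) : ℂ) * QGB A B z ξ‖₊)
      ≤ (2 : ℝ≥0∞) ^ (σ + 1) *
        ((⨆ t ∈ Set.Icc (0:ℝ) T, Xnorm 0 (A t)) *
            (∫⁻ t in Set.Icc (0:ℝ) T, Xnorm (σ + 1) (B t)) +
          (∫⁻ t in Set.Icc (0:ℝ) T, Xnorm (σ + 1) (A t)) *
            (⨆ t ∈ Set.Icc (0:ℝ) T, Xnorm 0 (B t))) := by
  have hQGB := measurable_QGB hA hB
  have hXA := measurable_Xnorm hA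
  have hXB := measurable_Xnorm hB
  refine iSup₂_le fun t ht => ?_
  calc _ ≤ ∫⁻ ξ, ∫⁻ z in Set.Icc 0 T, ENNReal.ofReal (‖ξ‖ ^ σ) * ‖QGB A B z ξ‖ₑ :=
        lintegral_mono fun ξ => by
          rw [lintegral_const_mul' _ _ ENNReal.ofReal_ne_top]
          exact mul_le_mul_right (enorm_intervalIntegral_exp_mul_le (norm_nonneg ξ) ht _) _
    _ = ∫⁻ z in Set.Icc 0 T, ∫⁻ ξ, ENNReal.ofReal (‖ξ‖ ^ σ) * ‖QGB A B z ξ‖ₑ :=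
        lintegral_lintegral_swap (by fun_prop)
    _ ≤ ∫⁻ z in Set.Icc 0 T, 2 ^ (σ + 1) * (Xnorm 0 (A z) * Xnorm (σ + 1) (B z)
          + Xnorm (σ + 1) (A z) * Xnorm 0 (B z)) :=
        lintegral_mono fun z =>
          lintegral_ofReal_rpow_mul_enorm_QGB_le hσ hA.of_uncurry_left hB.of_uncurry_left
    _ = 2 ^ (σ + 1) * ((∫⁻ z in Set.Icc 0 T, Xnorm 0 (A z) * Xnorm (σ + 1) (B z))
          + ∫⁻ z in Set.Icc 0 T, Xnorm (σ + 1) (A z) * Xnorm 0 (B z)) := by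
        rw [lintegral_const_mul _ (by fun_prop), lintegral_add_left (by fun_prop)]
    _ ≤ _ := by
        gcongr 2 ^ (σ + 1) * (?_ + ?_)
        · rw [mul_comm]
          exact (lintegral_congr fun z => mul_comm _ _).trans_le
            (setLIntegral_mul_le_setLIntegral_mul_iSup measurableSet_Icc (hXB _))
        · exact setLIntegral_mul_le_setLIntegral_mul_iSup measurableSet_Icc (hXA _)

/-- Lemma 2.7, `L^∞_T(X^σ)` part: bound for the bilinear Duhamel term
`Q(t,ξ) = ∫₀^t e^{-(t-z)|ξ|} N[A,B](z,ξ) dz`. -/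
theorem bilinear_duhamel_sup_bound (σ : ℝ) (hσ : -1 ≤ σ) (T : ℝ) (hT : 0 < T)
    (A B : ℝ → E2 → ℂ)
    (hA : Measurable (Function.uncurry A)) (hB : Measurable (Function.uncurry B))
    (hA0 : (⨆ t ∈ Set.Icc (0:ℝ) T, Xnorm 0 (A t)) < ⊤)
    (hB0 : (⨆ t ∈ Set.Icc (0:ℝ) T, Xnorm 0 (B t)) < ⊤)
    (hA1 : (∫⁻ t in Set.Icc (0:ℝ) T, Xnorm (σ + 1) (A t)) < ⊤)
    (hB1 : (∫⁻ t in Set.Icc (0:ℝ) T, Xnorm (σ + 1) (B t)) < ⊤) :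
    (⨆ t ∈ Set.Icc (0:ℝ) T, ∫⁻ ξ : E2, ENNReal.ofReal (‖ξ‖ ^ σ) *
        ‖∫ z in (0:ℝ)..t, ((Real.exp (-((t - z) * ‖ξ‖)) : ℝ) : ℂ) * QGB A B z ξ‖₊)
      ≤ (2 : ℝ≥0∞) ^ (σ + 1) *
        ((⨆ t ∈ Set.Icc (0:ℝ) T, Xnorm 0 (A t)) *
            (∫⁻ t in Set.Icc (0:ℝ) T, Xnorm (σ + 1) (B t)) +
          (∫⁻ t in Set.Icc (0:ℝ) T, Xnorm (σ + 1) (A t)) *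
            (⨆ t ∈ Set.Icc (0:ℝ) T, Xnorm 0 (B t))) :=
  bilinear_duhamel_sup_bound_general σ hσ T A B hA hB

end
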